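/- Let v₂ satisfy v₂[m+1] = A₂ v₂[m] + B₂ g[m] and v₁ satisfy v₁[n+1] = A₁ v₁[n] + B₁ f[n], where A₁^b = A₂, ∑_{j=1}^{b} A₁^{b−j} is invertible, B₁ = (∑_{j=1}^{b} A₁^{b−j})⁻¹ · B₂, f[mb+k] = g[m] for all k ∈ {0,...,b−1}, and v₁[0] = v₂[0]. Then v₁[m·b] = v₂[m] for all m ≥ 0. -/
import Mathlib


theorem expectation_adaptation_coarse_to_fine (n r : ℕ) (b : ℕ) (hb : 0 < b)
    (A₁ A₂ : Matrix (Fin n) (Fin n) ℝ) (B₁ B₂ : Matrix (Fin n) (Fin r) ℝ)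
    (v₁ v₂ : ℕ → Fin n → ℝ) (f g : ℕ → Fin r → ℝ)
    (hrec₂ : ∀ m, v₂ (m + 1) = A₂.mulVec (v₂ m) + B₂.mulVec (g m))
    (hrec₁ : ∀ k, v₁ (k + 1) = A₁.mulVec (v₁ k) + B₁.mulVec (f k))
    (hA : A₁ ^ b = A₂)
    (hS : IsUnit (∑ j ∈ Finset.Icc 1 b, A₁ ^ (b - j)))
    (hB : B₁ = (∑ j ∈ Finset.Icc 1 b, A₁ ^ (b - j))⁻¹ * B₂)
    (hf : ∀ m, ∀ k < b, f (m * b + k) = g m)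
    (h0 : v₁ 0 = v₂ 0) :
    ∀ m, v₁ (m * b) = v₂ m := by
  set S := ∑ j ∈ Finset.Icc 1 b, A₁ ^ (b - j) with hSdef
  have hSeq : S = ∑ i ∈ Finset.range b, A₁ ^ i := by
    rw [hSdef]
    refine Finset.sum_nbij' (fun j => b - j) (fun i => b - i) ?_ ?_ ?_ ?_ ?_
    · intro j hj
      simp only [Finset.mem_Icc] at hj
      simp only [Finset.mem_range]
      omega
    · intro i hi
      simp only [Finset.mem_range] at hi
      simp only [Finset.mem_Icc]
      omega
    · intro j hj
      simp only [Finset.mem_Icc] at hj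
      omega
    · intro i hi
      simp only [Finset.mem_range] at hi
      omega
    · intro j hj; rfl
  have hSmul : S * B₁ = B₂ := by
    rw [hB, ← Matrix.mul_assoc, Matrix.mul_nonsing_inv, Matrix.one_mul]
    exact (Matrix.isUnit_iff_isUnit_det S).mp hS
  have key : ∀ m, ∀ k ≤ b, v₁ (m * b + k) =
      (A₁ ^ k).mulVec (v₁ (m * b)) +
        ((∑ i ∈ Finset.range k, A₁ ^ i) * B₁).mulVec (g m) := by
    intro m k hk
    induction k with
    | zero =>
      simp [Matrix.one_mulVec]
    | succ k ih =>
      have hk' : k ≤ b := Nat.le_of_succ_le hk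
      rw [← Nat.add_assoc, hrec₁, ih hk', hf m k (Nat.lt_of_succ_le hk)]
      rw [Matrix.mulVec_add, Matrix.mulVec_mulVec, Matrix.mulVec_mulVec,
        ← Matrix.mul_assoc, geom_sum_succ, Matrix.add_mul, Matrix.add_mulVec,
        Matrix.one_mul, ← pow_succ']
      abel
  intro m
  induction m with
  | zero => simpa using h0
  | succ m ih =>
    have := key m b le_rfl
    rw [← hSeq, hSmul, hA, ih] at this
    calc v₁ ((m + 1) * b) = v₁ (m * b + b) := by ring_nf
    _ = v₂ (m + 1) := by rw [this, hrec₂]
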